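/- arXiv:0801.4608 — 2 statements merged into one kernel-verified Lean document; each statement's English description precedes it below -/
import Mathlib

section
/- Let c and g be real numbers with 0 < c < 1 and −2 < g < 2, and let b, q be real numbers with q > 0 and q ≥ (√(1 − c²)/c)·|b|. Then ν = q + (1 − c²)·g·b > 0. -/
/-- (A.25)–(A.26): if `0 < c < 1`, `−2 < g < 2`, `q > 0` and
`q ≥ (√(1 − c²)/c)·|b|`, then `ν = q + (1 − c²)·g·b > 0`. -/
theorem finsleroid_nu_pos (c g b q : ℝ) (hc0 : 0 < c) (hc1 : c < 1)
    (hg1 : -2 < g) (hg2 : g < 2) (hq : 0 < q)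
    (hqb : q ≥ (Real.sqrt (1 - c ^ 2) / c) * |b|) :
    0 < q + (1 - c ^ 2) * g * b := by
  rcases eq_or_ne b 0 with hb | hb
  · simpa [hb] using hq
  · set s := Real.sqrt (1 - c ^ 2) with hs
    have h1c : (0:ℝ) < 1 - c ^ 2 := by nlinarith
    have hs0 : 0 < s := Real.sqrt_pos.mpr h1c
    have hs2 : s ^ 2 = 1 - c ^ 2 := Real.sq_sqrt h1c.le
    -- key : 2*(1-c^2)*c ≤ s
    have key : 2 * (1 - c ^ 2) * c ≤ s := by
      nlinarith [sq_nonneg (s - c), mul_nonneg hs0.le (sq_nonneg (s - c))]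
    have hB : 0 < |b| := abs_pos.mpr hb
    have h2 : 2 * (1 - c ^ 2) * |b| ≤ (s / c) * |b| := by
      rw [div_mul_eq_mul_div, le_div_iff₀ hc0]
      nlinarith [mul_nonneg hB.le (sub_nonneg.mpr key)]
    have h3 : (1 - c ^ 2) * g * b ≥ -((1 - c ^ 2) * |g| * |b|) := by
      have := neg_abs_le ((1 - c ^ 2) * g * b)
      calc (1 - c ^ 2) * g * b ≥ -|(1 - c ^ 2) * g * b| := this
        _ = -((1 - c ^ 2) * |g| * |b|) := by
            rw [abs_mul, abs_mul, abs_of_pos h1c]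
    have hgabs : |g| < 2 := abs_lt.mpr ⟨hg1, hg2⟩
    have h4 : (1 - c ^ 2) * |g| * |b| < 2 * (1 - c ^ 2) * |b| := by
      nlinarith [mul_pos (mul_pos (show (0:ℝ) < 2 - |g| by linarith) h1c) hB]
    linarith
end

section
/- Fix a real parameter g with −2 < g < 2 and set h = √(1 − g²/4), G = g/h. Then for every (b₀,q₀) with q₀ > 0, the function b ↦ f(b,q₀) is differentiable at b₀ with derivative ∂f/∂b = −q₀·h / B(b₀,q₀). -/
noncomputable def finsH (g : ℝ) : ℝ := Real.sqrt (1 - g ^ 2 / 4)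

noncomputable def finsG (g : ℝ) : ℝ := g / finsH g

/-- The characteristic quadratic form `B(b,q) = b² + g·q·b + q²`. -/
noncomputable def finsB (g b q : ℝ) : ℝ := b ^ 2 + g * q * b + q ^ 2

/-- `L(b,q) = q + (g/2)·b`. -/
noncomputable def finsL (g b q : ℝ) : ℝ := q + (g / 2) * b

/-- The piecewise-defined Finsleroid function `f` on the half-plane `q > 0`. -/
noncomputable def finsF (g b q : ℝ) : ℝ :=
  if 0 < b then -Real.arctan (finsG g / 2) + Real.arctan (finsL g b q / (finsH g * b))
  else if b < 0 then
    Real.pi - Real.arctan (finsG g / 2) + Real.arctan (finsL g b q / (finsH g * b))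
  else Real.pi / 2 - Real.arctan (finsG g / 2)

/-- The Finsleroid-regular metric function `K(b,q) = √(B(b,q))·exp(−(G/2)·f(b,q))`. -/
noncomputable def finsK (g b q : ℝ) : ℝ :=
  Real.sqrt (finsB g b q) * Real.exp (-(finsG g / 2) * finsF g b q)

/-!
Away from `b = 0`, `f(·, q)` is a constant plus `arctan (L / (h b))`. Near `b = 0`, where
`L > 0`, the identity `arctan x⁻¹ = ±π/2 - arctan x` rewrites every branch of `f` as
`π/2 - arctan (G/2) - arctan (h b / L)`, which is smooth across `b = 0`. In both forms the
derivative is `(u' v - u v') / (u² + v²)` with `u² + v² = L² + h²b² = B` and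
`u' v - u v' = ∓h (L - (g/2) b) = ∓h q`.
-/

open Real Filter Topology

theorem HasDerivAt.arctan_div {u v : ℝ → ℝ} {u' v' x : ℝ} (hu : HasDerivAt u u' x)
    (hv : HasDerivAt v v' x) (hx : v x ≠ 0) :
    HasDerivAt (fun y => Real.arctan (u y / v y))
      ((u' * v x - u x * v') / (u x ^ 2 + v x ^ 2)) x := by
  have h := (hu.div hv hx).arctan
  simp only [Pi.div_apply] at h
  convert h using 1
  field_simp
  ring

lemma finsH_sq {g : ℝ} (hg : g ^ 2 ≤ 4) : finsH g ^ 2 = 1 - g ^ 2 / 4 := by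
  rw [finsH, sq_sqrt]
  linarith

lemma finsH_pos {g : ℝ} (hg : g ^ 2 < 4) : 0 < finsH g := by
  rw [finsH, sqrt_pos]
  linarith

lemma sq_finsL_add_sq_finsH_mul {g : ℝ} (hg : g ^ 2 ≤ 4) (b q : ℝ) :
    finsL g b q ^ 2 + (finsH g * b) ^ 2 = finsB g b q := by
  rw [mul_pow, finsH_sq hg, finsL, finsB]
  ring

lemma hasDerivAt_finsL (g q b : ℝ) : HasDerivAt (fun b => finsL g b q) (g / 2) b := by
  simpa [finsL] using ((hasDerivAt_id' b).const_mul (g / 2)).const_add q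

lemma finsF_eventuallyEq_of_ne_zero {g b₀ : ℝ} (q : ℝ) (hb : b₀ ≠ 0) :
    ∃ c, (fun b => finsF g b q) =ᶠ[𝓝 b₀] fun b => c + arctan (finsL g b q / (finsH g * b)) := by
  rcases hb.lt_or_gt with hb | hb
  · refine ⟨π - arctan (finsG g / 2), ?_⟩
    filter_upwards [eventually_lt_nhds hb] with b hb
    rw [finsF, if_neg hb.not_gt, if_pos hb]
  · refine ⟨-arctan (finsG g / 2), ?_⟩
    filter_upwards [eventually_gt_nhds hb] with b hb
    rw [finsF, if_pos hb]

lemma finsF_eq_of_finsL_pos {g b q : ℝ} (hh : 0 < finsH g) (hL : 0 < finsL g b q) :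
    finsF g b q = π / 2 - arctan (finsG g / 2) - arctan (finsH g * b / finsL g b q) := by
  rcases lt_trichotomy b 0 with hb | rfl | hb
  · have hx : finsH g * b / finsL g b q < 0 :=
      div_neg_of_neg_of_pos (mul_neg_of_pos_of_neg hh hb) hL
    have hinv := arctan_inv_of_neg hx
    rw [inv_div] at hinv
    rw [finsF, if_neg hb.not_gt, if_pos hb, hinv]
    ring
  · simp [finsF]
  · have hx : 0 < finsH g * b / finsL g b q := div_pos (mul_pos hh hb) hL
    have hinv := arctan_inv_of_pos hx
    rw [inv_div] at hinv
    rw [finsF, if_pos hb, hinv]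
    ring

/-- for `q₀ > 0`, the function `b ↦ f(b,q₀)` is differentiable at
any `b₀` with derivative `∂f/∂b = −q₀·h / B(b₀,q₀)`. -/
theorem finsleroid_f_deriv_b (g : ℝ) (hg1 : -2 < g) (hg2 : g < 2)
    (b₀ q₀ : ℝ) (hq : 0 < q₀) :
    HasDerivAt (fun b : ℝ => finsF g b q₀)
      (-(q₀ * finsH g) / finsB g b₀ q₀) b₀ := by
  have hg : g ^ 2 < 4 := by nlinarith
  have hh := finsH_pos hg
  have hL := hasDerivAt_finsL g q₀ b₀
  have hhb : HasDerivAt (fun b => finsH g * b) (finsH g) b₀ := by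
    simpa using (hasDerivAt_id' b₀).const_mul (finsH g)
  by_cases hb : b₀ = 0
  · subst hb
    have hL0 : 0 < finsL g 0 q₀ := by simpa [finsL] using hq
    have hev : (fun b => finsF g b q₀) =ᶠ[𝓝 0]
        fun b => π / 2 - arctan (finsG g / 2) - arctan (finsH g * b / finsL g b q₀) :=
      (hL.continuousAt.eventually (lt_mem_nhds hL0)).mono fun b hb => finsF_eq_of_finsL_pos hh hb
    refine (((HasDerivAt.arctan_div hhb hL hL0.ne').const_sub _).congr_of_eventuallyEq
      hev).congr_deriv ?_
    rw [add_comm, sq_finsL_add_sq_finsH_mul hg.le, finsL]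
    ring
  · obtain ⟨c, hev⟩ := finsF_eventuallyEq_of_ne_zero q₀ hb
    refine (((HasDerivAt.arctan_div hL hhb (mul_ne_zero hh.ne' hb)).const_add
      c).congr_of_eventuallyEq hev).congr_deriv ?_
    rw [sq_finsL_add_sq_finsH_mul hg.le, finsL]
    ring
end
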